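/- Let D be an oriented knot diagram with n ≥ 1 crossings, modeled by a Gauss code g. Then D is an alternating diagram if and only if X_D(t) = n · t^d for some natural number d. -/

import Mathlib

open Polynomial Finset

/-- An oriented knot diagram with `n` crossings, modeled by its oriented Gauss code. -/
structure GaussCode (n : ℕ) where
  g : ZMod (2 * n) → Fin n × Bool
  o : Fin n → ZMod (2 * n)
  u : Fin n → ZMod (2 * n)
  over_iff : ∀ (c : Fin n) (e : ZMod (2 * n)), g e = (c, true) ↔ e = o c
  under_iff : ∀ (c : Fin n) (e : ZMod (2 * n)), g e = (c, false) ↔ e = u c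

namespace GaussCode

variable {n : ℕ}

/-- The warping degree of the base position `e`: the number of crossings whose
under-passage occurs strictly before its over-passage when traversing the diagram
starting at `e`. -/
def d (D : GaussCode n) (e : ZMod (2 * n)) : ℕ :=
  (Finset.univ.filter fun c : Fin n => (D.u c - e).val < (D.o c - e).val).card

/-- The warping crossing polynomial. -/
noncomputable def Xpoly (D : GaussCode n) : Polynomial ℤ :=
  ∑ c : Fin n, Polynomial.X ^ D.d (D.o c)

/-- The warping polynomial. -/
noncomputable def Wpoly (D : GaussCode n) : Polynomial ℤ :=
  ∑ k ∈ Finset.range (2 * n), Polynomial.X ^ D.d (k : ZMod (2 * n))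

/-- The warping degree of the diagram: minimum over all base positions. -/
noncomputable def wdeg (D : GaussCode n) : ℕ :=
  sInf (Set.range fun e : ZMod (2 * n) => D.d e)

/-- The diagram is alternating. -/
def Alternating (D : GaussCode n) : Prop :=
  ∀ e : ZMod (2 * n), (D.g e).2 ≠ (D.g (e + 1)).2

end GaussCode


/-!
Moving the base point across position `e` changes the warping degree by `+1` if `e` is an
over-passage and by `-1` if it is an under-passage, so `d` is a height function of the closed
`±1` walk read off the Gauss code. If the walk alternates, `d` lowered by one at the
under-passages is shift invariant, hence constant, and all over-passages share one warping
degree. Conversely, if `d = c` at every over-passage, then a minimum of `d` sits at an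
over-passage and a maximum right after one, so `c ≤ d ≤ c + 1` everywhere, which rules out two
equal consecutive steps. Finally `X_D = n t^c` exactly when all exponents `d (o c)` equal `c`.
-/

open Function

namespace ZMod

variable {N : ℕ} [NeZero N]

lemma val_neg_one_eq_sub_one : (-1 : ZMod N).val = N - 1 := by
  obtain ⟨m, rfl⟩ := Nat.exists_eq_succ_of_ne_zero (NeZero.ne N)
  simp [ZMod.val_neg_one]

lemma val_sub_add_one_add_one {x e : ZMod N} (h : x ≠ e) :
    (x - (e + 1)).val + 1 = (x - e).val := by
  have hne : (x - e).val ≠ 0 := by simpa [ZMod.val_eq_zero, sub_eq_zero] using h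
  have hcast : x - (e + 1) = (((x - e).val - 1 : ℕ) : ZMod N) := by
    rw [Nat.cast_sub (Nat.one_le_iff_ne_zero.2 hne), ZMod.natCast_zmod_val]
    ring
  rw [hcast, ZMod.val_cast_of_lt (by have := ZMod.val_lt (x - e); omega)]
  omega

lemma eq_zero_of_periodic {β : Type*} {f : ZMod N → β} (hf : Periodic f 1) (e : ZMod N) :
    f e = f 0 := by
  simpa using hf.nat_mul_eq e.val

def IsHeight (s : ZMod N → Bool) (w : ZMod N → ℕ) : Prop :=
  ∀ e, (w (e + 1) : ℤ) = w e + if s e then 1 else -1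

end ZMod

namespace ZMod.IsHeight

variable {N : ℕ} [NeZero N] {s : ZMod N → Bool} {w : ZMod N → ℕ}

lemma eq_of_alternating (hw : IsHeight s w) (halt : ∀ e, s e ≠ s (e + 1)) {e e' : ZMod N}
    (he : s e) (he' : s e') : w e = w e' := by
  -- `w` lowered by one at the descending positions is invariant under `e ↦ e + 1`
  let F : ZMod N → ℤ := fun e => w e - if s e then 0 else 1
  have hF : Periodic F 1 := fun e => by
    have hstep := hw e
    have halt_e := halt e
    simp only [F]
    cases h : s e <;> cases h' : s (e + 1) <;> simp only [h, h'] at hstep halt_e ⊢ <;> grind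
  have := (eq_zero_of_periodic hF e).trans (eq_zero_of_periodic hF e').symm
  simpa [F, he, he'] using this

variable {c : ℕ}

lemma le_of_forall_eq (hw : IsHeight s w) (hc : ∀ e, s e → w e = c) (x : ZMod N) :
    c ≤ w x := by
  obtain ⟨m, hm⟩ := Finite.exists_min w
  suffices s m by exact hc m this ▸ hm x
  by_contra hsm
  have hstep := hw m
  have := hm (m + 1)
  simp only [hsm, if_false] at hstep
  omega

lemma le_add_one_of_forall_eq (hw : IsHeight s w) (hc : ∀ e, s e → w e = c) (x : ZMod N) :
    w x ≤ c + 1 := by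
  obtain ⟨M, hM⟩ := Finite.exists_max w
  have hstep := hw (M - 1)
  rw [sub_add_cancel] at hstep
  cases hs : s (M - 1) <;> simp only [hs, Bool.false_eq_true, if_true, if_false] at hstep
  · have := hM (M - 1)
    omega
  · have := hc _ hs
    have := hM x
    omega

lemma alternating_of_forall_eq (hw : IsHeight s w) (hc : ∀ e, s e → w e = c) (e : ZMod N) :
    s e ≠ s (e + 1) := by
  have hdown : ∀ x, s x = false → w x = c + 1 := fun x hx => by
    have hstep := hw x
    have := le_of_forall_eq hw hc (x + 1)
    have := le_add_one_of_forall_eq hw hc x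
    simp only [hx, Bool.false_eq_true, if_false] at hstep
    omega
  have hstep := hw e
  cases hs : s e <;> cases hs' : s (e + 1) <;> simp only [hs] at hstep <;> simp_all

end ZMod.IsHeight

namespace Polynomial

lemma sum_X_pow_eq_card_mul_X_pow_iff {R ι : Type*} [Semiring R] [CharZero R] [Fintype ι]
    (f : ι → ℕ) (d : ℕ) :
    ∑ i, (X : R[X]) ^ f i = (Fintype.card ι : R[X]) * X ^ d ↔ ∀ i, f i = d := by
  constructor
  · intro h
    have hcoeff := congrArg (coeff · d) h
    simp only [finsetSum_coeff, coeff_X_pow, ← C_eq_natCast, coeff_C_mul, if_true, mul_one,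
      sum_boole] at hcoeff
    have hcard : #{i | d = f i} = #(univ : Finset ι) := by exact_mod_cast hcoeff
    exact fun i => (card_filter_eq_iff.1 hcard i (mem_univ i)).symm
  · intro h
    simp [h, sum_const, nsmul_eq_mul]

end Polynomial

namespace GaussCode

variable {n : ℕ} (D : GaussCode n)

lemma neZero (D : GaussCode n) : NeZero n :=
  ⟨fun h => by subst h; exact (D.g 0).1.elim0⟩

lemma g_o (c : Fin n) : D.g (D.o c) = (c, true) := (D.over_iff c _).2 rfl

lemma g_u (c : Fin n) : D.g (D.u c) = (c, false) := (D.under_iff c _).2 rfl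

lemma o_ne_u (c : Fin n) : D.o c ≠ D.u c := fun h => by simpa [h, g_u] using D.g_o c

lemma isHeight_d [NeZero n] : ZMod.IsHeight (fun e => (D.g e).2) D.d := by
  intro e
  have hterm : ∀ c, (if (D.u c - (e + 1)).val < (D.o c - (e + 1)).val then 1 else 0 : ℤ) =
      (if (D.u c - e).val < (D.o c - e).val then 1 else 0) +
        if c = (D.g e).1 then (if (D.g e).2 then 1 else -1) else 0 := by
    intro c
    by_cases ho : D.o c = e
    · have hu := ZMod.val_sub_add_one_add_one (ho ▸ (D.o_ne_u c).symm)
      have := ZMod.val_lt (D.u c - e)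
      rw [← ho, D.g_o, ho, sub_self, sub_add_cancel_left, ZMod.val_neg_one_eq_sub_one]
      simp only [ZMod.val_zero, if_true]
      split_ifs <;> omega
    by_cases hu : D.u c = e
    · have ho' := ZMod.val_sub_add_one_add_one ho
      have := ZMod.val_lt (D.o c - (e + 1))
      rw [← hu, D.g_u, hu, sub_self, sub_add_cancel_left, ZMod.val_neg_one_eq_sub_one]
      simp only [ZMod.val_zero, if_true, Bool.false_eq_true, if_false]
      split_ifs <;> omega
    have hc : c ≠ (D.g e).1 := fun hc => by
      cases hs : (D.g e).2
      · exact hu ((D.under_iff c e).1 (Prod.ext hc.symm hs)).symm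
      · exact ho ((D.over_iff c e).1 (Prod.ext hc.symm hs)).symm
    have := ZMod.val_sub_add_one_add_one ho
    have := ZMod.val_sub_add_one_add_one hu
    simp only [hc, if_false, add_zero]
    split_ifs <;> omega
  simp only [d, card_filter]
  push_cast
  rw [sum_congr rfl fun c _ => hterm c, sum_add_distrib, sum_ite_eq']
  simp

lemma alternating_iff_forall_d_o_eq [NeZero n] (c₀ : Fin n) :
    D.Alternating ↔ ∀ c, D.d (D.o c) = D.d (D.o c₀) := by
  have hover : ∀ e, (D.g e).2 = true → e = D.o (D.g e).1 :=
    fun e h => (D.over_iff _ _).1 (Prod.ext rfl h)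
  constructor
  · intro hA c
    exact D.isHeight_d.eq_of_alternating hA (by simp [g_o]) (by simp [g_o])
  · intro h
    refine D.isHeight_d.alternating_of_forall_eq (c := D.d (D.o c₀)) fun e he => ?_
    rw [hover e he]
    exact h _

end GaussCode

theorem alternating_iff_Xpoly_general (n : ℕ) (D : GaussCode n) :
    D.Alternating ↔ ∃ d : ℕ, D.Xpoly = (n : Polynomial ℤ) * Polynomial.X ^ d := by
  have := D.neZero
  have hX := fun d => Polynomial.sum_X_pow_eq_card_mul_X_pow_iff (R := ℤ) (D.d ∘ D.o) d
  simp only [Fintype.card_fin, Function.comp_apply] at hX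
  simp only [D.alternating_iff_forall_d_o_eq 0, GaussCode.Xpoly, hX]
  exact ⟨fun h => ⟨_, h⟩, fun ⟨d, hd⟩ c => (hd c).trans (hd 0).symm⟩

/-- A knot diagram with `n ≥ 1` crossings is alternating iff `X_D(t) = n t^d` for some `d`. -/
theorem alternating_iff_Xpoly (n : ℕ) (hn : 1 ≤ n) (D : GaussCode n) :
    D.Alternating ↔ ∃ d : ℕ, D.Xpoly = (n : Polynomial ℤ) * Polynomial.X ^ d :=
  alternating_iff_Xpoly_general n D
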